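/- For every real λ > −1, real η, and real ρ > 0, the complex number F_λ(η,ρ) = A·M(λ+1−iη, 2λ+2, 2iρ) is real, i.e., its imaginary part vanishes. -/

import Mathlib

open Real Complex Finset Polynomial Filter

noncomputable def pk (k : ℕ) (x : ℂ) : ℂ := (ascPochhammer ℂ k).eval x

lemma pk_zero (x : ℂ) : pk 0 x = 1 := by simp [pk]

lemma pk_succ (k : ℕ) (x : ℂ) : pk (k+1) x = pk k x * (x + k) :=
  ascPochhammer_succ_eval k x

lemma pk_succ_left (k : ℕ) (x : ℂ) : pk (k+1) x = x * pk k (x + 1) := by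
  rw [pk, ascPochhammer_succ_left, eval_mul, eval_comp]
  simp [pk]

lemma pk_mul (k m : ℕ) (b : ℂ) : pk (k + m) b = pk k b * pk m (b + k) := by
  rw [pk, ← ascPochhammer_mul, eval_mul, eval_comp]
  simp [pk]

lemma kummer_sum (a : ℂ) : ∀ (n : ℕ) (b : ℂ),
    ∑ k ∈ Finset.range (n+1), (-1:ℂ)^k * (n.choose k : ℂ) * pk k a * pk (n-k) (b + k)
    = pk n (b - a) := by
  intro n
  induction n with
  | zero => intro b; simp [pk_zero]
  | succ n ih =>
    intro b
    have hsplit : ∀ k ∈ Finset.range (n+1),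
        (-1:ℂ)^(k+1) * ((n+1).choose (k+1) : ℂ) * pk (k+1) a * pk (n+1-(k+1)) (b + (k+1:ℕ))
        = (-(b+n)) * ((-1:ℂ)^k * (n.choose k : ℂ) * pk k a * pk (n-k) (b + k))
          + (b - a) * ((-1:ℂ)^k * (n.choose k : ℂ) * pk k a * pk (n-k) ((b+1) + k))
          + ((-1:ℂ)^(k+1) * (n.choose (k+1) : ℂ) * pk (k+1) a * pk (n-k) (b + (k+1:ℕ))) := by
      intro k hk
      rw [Finset.mem_range] at hk
      have hk' : k ≤ n := Nat.lt_succ_iff.mp hk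
      have h1 : (n+1) - (k+1) = n - k := by omega
      have hcast : ((n - k : ℕ) : ℂ) = (n : ℂ) - k := by
        push_cast [Nat.cast_sub hk']; ring
      have hbk : (b + k) * pk (n-k) (b + k + 1) = pk (n-k) (b+k) * (b + n) := by
        rw [← pk_succ_left, pk_succ, hcast]; ring
      rw [h1, Nat.choose_succ_succ]
      push_cast
      rw [pk_succ k a]
      have e1 : b + ((k:ℂ)+1) = (b + k) + 1 := by ring
      have e2 : (b+1) + (k:ℂ) = (b + k) + 1 := by ring
      rw [e1, e2]
      linear_combination (-(-1:ℂ)^k * (n.choose k : ℂ) * pk k a) * hbk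
    have hA2 : (∑ k ∈ Finset.range (n+1),
          (-1:ℂ)^(k+1) * ((n).choose (k+1) : ℂ) * pk (k+1) a * pk (n-k) (b+(k+1:ℕ)))
          + pk (n+1) b = (b+n) * pk n (b-a) := by
      have h := Finset.sum_range_succ'
        (fun k => (-1:ℂ)^k * ((n).choose k : ℂ) * pk k a * pk (n+1-k) (b+k)) (n+1)
      simp only [Nat.succ_sub_succ, pow_zero, Nat.choose_zero_right, Nat.cast_one, one_mul,
        pk_zero, Nat.sub_zero, Nat.cast_zero, add_zero] at h
      rw [← h]
      rw [Finset.sum_range_succ]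
      simp only [Nat.choose_succ_self, Nat.cast_zero, mul_zero, zero_mul, add_zero]
      have hterm : ∀ k ∈ Finset.range (n+1),
          (-1:ℂ)^k * ((n).choose k : ℂ) * pk k a * pk (n+1-k) (b+k)
          = ((-1:ℂ)^k * ((n).choose k : ℂ) * pk k a * pk (n-k) (b+k)) * (b+n) := by
        intro k hk
        rw [Finset.mem_range] at hk
        have hk' : k ≤ n := Nat.lt_succ_iff.mp hk
        have h1 : n + 1 - k = (n - k) + 1 := by omega
        have hcast : ((n - k : ℕ) : ℂ) = (n : ℂ) - k := by
          push_cast [Nat.cast_sub hk']; ring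
        rw [h1, pk_succ, hcast]; ring
      rw [Finset.sum_congr rfl hterm, ← Finset.sum_mul, ih b]
      ring
    rw [Finset.sum_range_succ']
    simp only [pow_zero, Nat.choose_zero_right, Nat.cast_one, one_mul, pk_zero,
      Nat.sub_zero, Nat.cast_zero, add_zero]
    rw [Finset.sum_congr rfl hsplit, Finset.sum_add_distrib, Finset.sum_add_distrib,
      ← Finset.mul_sum, ← Finset.mul_sum, ih b, ih (b+1)]
    have hb1 : b + 1 - a = b - a + 1 := by ring
    rw [hb1]
    linear_combination hA2 - pk_succ_left n (b-a)

lemma pk_ne_zero {b : ℂ} (hb : ∀ j : ℕ, b + (j:ℂ) ≠ 0) (k : ℕ) : pk k b ≠ 0 := by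
  induction k with
  | zero => rw [pk_zero]; exact one_ne_zero
  | succ k ih => rw [pk_succ]; exact mul_ne_zero ih (hb k)

lemma coeff_id {b : ℂ} (hb : ∀ j : ℕ, b + (j:ℂ) ≠ 0) (a z : ℂ) (n : ℕ) :
    ∑ k ∈ Finset.range (n+1),
      (pk k a * z^k / (pk k b * (k.factorial : ℂ))) *
        ((-z)^(n-k) / ((n-k).factorial : ℂ))
    = pk n (b - a) * (-z)^n / (pk n b * (n.factorial : ℂ)) := by
  have key := kummer_sum a n b
  have hterm : ∀ k ∈ Finset.range (n+1),
      (pk k a * z^k / (pk k b * (k.factorial : ℂ))) *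
        ((-z)^(n-k) / ((n-k).factorial : ℂ))
      = ((-1:ℂ)^k * (n.choose k : ℂ) * pk k a * pk (n-k) (b + k)) *
          ((-z)^n / (pk n b * (n.factorial : ℂ))) := by
    intro k hk
    rw [Finset.mem_range] at hk
    have hk' : k ≤ n := Nat.lt_succ_iff.mp hk
    have hfac : (n.factorial : ℂ) = (n.choose k : ℂ) * (k.factorial : ℂ) * ((n-k).factorial : ℂ) := by
      rw [← Nat.cast_mul, ← Nat.cast_mul, Nat.choose_mul_factorial_mul_factorial hk']
    have hpk : pk n b = pk k b * pk (n-k) (b + k) := by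
      rw [← pk_mul, Nat.add_sub_cancel' hk']
    have hsgn : ((-1:ℂ))^(n-k) * (-1:ℂ)^k = (-1)^n := by
      rw [← pow_add, Nat.sub_add_cancel hk']
    have hz1 : (-z)^(n-k) = (-1:ℂ)^(n-k) * z^(n-k) := by rw [neg_pow]
    have hz2 : (-z)^n = (-1:ℂ)^n * z^n := by rw [neg_pow]
    have hzz : z^k * z^(n-k) = z^n := by rw [← pow_add, Nat.add_sub_cancel' hk']
    have h1 : pk k b ≠ 0 := pk_ne_zero hb k
    have h2 : pk n b ≠ 0 := pk_ne_zero hb n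
    have h3 : (k.factorial : ℂ) ≠ 0 := Nat.cast_ne_zero.mpr k.factorial_ne_zero
    have h4 : ((n-k).factorial : ℂ) ≠ 0 := Nat.cast_ne_zero.mpr (n-k).factorial_ne_zero
    have h5 : (n.factorial : ℂ) ≠ 0 := Nat.cast_ne_zero.mpr n.factorial_ne_zero
    have h6 : ((n.choose k : ℕ) : ℂ) ≠ 0 :=
      Nat.cast_ne_zero.mpr (Nat.choose_pos hk').ne'
    have h7 : pk (n-k) (b + k) ≠ 0 := by
      refine pk_ne_zero (fun j => ?_) (n-k)
      have := hb (k + j)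
      push_cast at this ⊢
      intro h; exact this (by linear_combination h)
    have hs2 : ((-1:ℂ))^(n-k) = (-1)^n * (-1)^k := by
      rw [← hsgn, mul_assoc, ← pow_add, ← two_mul, pow_mul]
      norm_num
    rw [hz1, hz2, hs2, hpk, hfac, ← hzz]
    field_simp
  rw [Finset.sum_congr rfl hterm, ← Finset.sum_mul, key, mul_div_assoc]

lemma kummer_summable_norm {b : ℂ} (hb : ∀ j : ℕ, b + (j:ℂ) ≠ 0) (a z : ℂ) :
    Summable (fun k : ℕ => ‖pk k a * z^k / (pk k b * (k.factorial : ℂ))‖) := by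
  set t : ℕ → ℂ := fun k => pk k a * z^k / (pk k b * (k.factorial : ℂ)) with ht
  apply summable_of_ratio_norm_eventually_le (r := 1/2) (by norm_num)
  have hrec : ∀ k : ℕ, t (k+1) = t k * ((a + k) * z / ((b + k) * ((k:ℂ) + 1))) := by
    intro k
    have h1 : pk k b ≠ 0 := pk_ne_zero hb k
    have h2 : (b + k) ≠ 0 := hb k
    have h3 : (k.factorial : ℂ) ≠ 0 := Nat.cast_ne_zero.mpr k.factorial_ne_zero
    have h4 : ((k:ℂ) + 1) ≠ 0 := by
      have := Nat.cast_ne_zero (R := ℂ).mpr (Nat.succ_ne_zero k)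
      push_cast at this; exact this
    simp only [ht, pk_succ, Nat.factorial_succ, pow_succ]
    push_cast
    field_simp
  filter_upwards [eventually_ge_atTop (⌈‖a‖ + 2*‖b‖⌉₊ + ⌈4*‖z‖⌉₊ + ⌈‖b‖⌉₊ + 1)] with k hk
  have c1 : (⌈‖a‖ + 2*‖b‖⌉₊ : ℝ) ≤ (k:ℝ) := by exact_mod_cast Nat.le_of_lt_succ (by omega)
  have c2 : (⌈4*‖z‖⌉₊ : ℝ) ≤ (k:ℝ) := by exact_mod_cast Nat.le_of_lt_succ (by omega)
  have c3 : (⌈‖b‖⌉₊ : ℝ) ≤ (k:ℝ) - 1 := by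
    have : (⌈‖b‖⌉₊ + 1 : ℕ) ≤ k := by omega
    have := Nat.cast_le (α := ℝ).mpr this
    push_cast at this; linarith
  have hka : (‖a‖ + 2*‖b‖) ≤ (k:ℝ) := le_trans (Nat.le_ceil _) c1
  have hkz : 4*‖z‖ ≤ (k:ℝ) + 1 := le_trans (Nat.le_ceil _) (by linarith)
  have hkb : ‖b‖ < (k:ℝ) := lt_of_le_of_lt (Nat.le_ceil _) (by linarith)
  have h1 : ‖a + (k:ℂ)‖ ≤ ‖a‖ + (k:ℝ) := by
    refine le_trans (norm_add_le _ _) ?_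
    rw [Complex.norm_natCast]
  have h2 : (k:ℝ) - ‖b‖ ≤ ‖b + (k:ℂ)‖ := by
    have h := norm_sub_norm_le ((k:ℂ)) (-b)
    rw [norm_neg, sub_neg_eq_add, add_comm, Complex.norm_natCast] at h
    exact h
  have hpos : (0:ℝ) < ‖b + (k:ℂ)‖ := lt_of_lt_of_le (by linarith) h2
  have hnk : ‖((k:ℂ)+1)‖ = (k:ℝ) + 1 := by
    rw [show ((k:ℂ)+1) = ((k+1:ℕ):ℂ) by push_cast; ring, Complex.norm_natCast]
    push_cast; ring
  have hw : ‖(a + (k:ℂ)) * z / ((b + (k:ℂ)) * ((k:ℂ) + 1))‖ ≤ 1/2 := by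
    rw [norm_div, norm_mul, norm_mul, hnk]
    rw [div_le_iff₀ (by positivity)]
    nlinarith [norm_nonneg z, norm_nonneg (a + (k:ℂ)), norm_nonneg b, h1, h2, hka, hkz]
  rw [norm_norm, norm_norm]
  show ‖t (k+1)‖ ≤ 1/2 * ‖t k‖
  calc ‖t (k+1)‖ = ‖t k‖ * ‖(a + (k:ℂ)) * z / ((b + (k:ℂ)) * ((k:ℂ) + 1))‖ := by
        rw [hrec k, norm_mul]
    _ ≤ ‖t k‖ * (1/2) := mul_le_mul_of_nonneg_left hw (norm_nonneg _)
    _ = 1/2 * ‖t k‖ := mul_comm _ _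

/-- The Kummer confluent hypergeometric function M(a,b,z) = Σ (a)_k z^k/((b)_k k!). -/
noncomputable def kummerM (a b z : ℂ) : ℂ :=
  ∑' k : ℕ, (ascPochhammer ℂ k).eval a * z ^ k /
    ((ascPochhammer ℂ k).eval b * ((Nat.factorial k : ℕ) : ℂ))

lemma kummerM_eq (a b z : ℂ) :
    kummerM a b z = ∑' k : ℕ, pk k a * z ^ k / (pk k b * (k.factorial : ℂ)) := rfl

lemma pk_conj (k : ℕ) (x : ℂ) : (starRingEnd ℂ) (pk k x) = pk k ((starRingEnd ℂ) x) := by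
  induction k with
  | zero => simp [pk_zero]
  | succ k ih => simp [pk_succ, ih]

lemma kummerM_conj (a b z : ℂ) :
    (starRingEnd ℂ) (kummerM a b z)
      = kummerM ((starRingEnd ℂ) a) ((starRingEnd ℂ) b) ((starRingEnd ℂ) z) := by
  rw [kummerM_eq, kummerM_eq, conj_tsum]
  refine tsum_congr fun k => ?_
  rw [map_div₀, map_mul, map_mul, map_pow, pk_conj, pk_conj, Complex.conj_natCast]

lemma exp_eq_tsum_div' (z : ℂ) : Complex.exp z = ∑' n : ℕ, z ^ n / ((n.factorial : ℕ) : ℂ) := by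
  rw [Complex.exp_eq_exp_ℂ, NormedSpace.exp_eq_tsum_div]

lemma kummer_transform (a : ℂ) {b : ℂ} (hb : ∀ j : ℕ, b + (j:ℂ) ≠ 0) (z : ℂ) :
    Complex.exp (-z) * kummerM a b z = kummerM (b - a) b (-z) := by
  have hes : Summable (fun n : ℕ => ‖(-z)^n / ((n.factorial : ℕ):ℂ)‖) := by
    refine (Real.summable_pow_div_factorial ‖z‖).congr fun n => ?_
    rw [norm_div, norm_pow, norm_neg, Complex.norm_natCast]
  rw [exp_eq_tsum_div', kummerM_eq, mul_comm,
    tsum_mul_tsum_eq_tsum_sum_range_of_summable_norm (kummer_summable_norm hb a z) hes,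
    kummerM_eq]
  exact tsum_congr fun n => coeff_id hb a z n

/-- The regular Coulomb wave function
F_λ(η,ρ) = A · M(λ+1−iη, 2λ+2, 2iρ), with
A = |Γ(λ+1+iη)| e^{−πη/2−iρ} (2ρ)^{λ+1} / (2Γ(2λ+2)). -/
noncomputable def coulombF (lam η ρ : ℝ) : ℂ :=
  ((‖Complex.Gamma ((lam : ℂ) + 1 + (η : ℂ) * Complex.I)‖ : ℝ) : ℂ) *
      Complex.exp (-(((Real.pi : ℝ) : ℂ) * (η : ℂ)) / 2 - (ρ : ℂ) * Complex.I) *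
      (((2 * ρ : ℝ) : ℂ) ^ ((lam : ℂ) + 1)) / (2 * Complex.Gamma (2 * (lam : ℂ) + 2)) *
    kummerM ((lam : ℂ) + 1 - (η : ℂ) * Complex.I) (2 * (lam : ℂ) + 2)
      (2 * (ρ : ℂ) * Complex.I)


/-- for real λ > −1, real η and ρ > 0, the complex number F_λ(η,ρ) is
real, i.e., its imaginary part vanishes. -/
theorem coulombF_isReal (lam η ρ : ℝ) (hlam : -1 < lam) (hρ : 0 < ρ) :
    (coulombF lam η ρ).im = 0 := by
  rw [← Complex.conj_eq_iff_im]
  set a : ℂ := (lam : ℂ) + 1 - (η : ℂ) * Complex.I with ha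
  set b : ℂ := 2 * (lam : ℂ) + 2 with hbdef
  set z : ℂ := 2 * (ρ : ℂ) * Complex.I with hz
  have hb : ∀ j : ℕ, b + (j:ℂ) ≠ 0 := by
    intro j
    have he : b + (j:ℂ) = ((2*lam+2+j : ℝ) : ℂ) := by rw [hbdef]; push_cast; ring
    rw [he, Complex.ofReal_ne_zero]
    have hj : (0:ℝ) ≤ j := Nat.cast_nonneg j
    nlinarith
  have hconj_a : (starRingEnd ℂ) a = b - a := by
    rw [ha, hbdef]
    simp only [map_sub, map_add, map_mul, map_one, map_ofNat, Complex.conj_ofReal,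
      Complex.conj_I]
    ring
  have hconj_b : (starRingEnd ℂ) b = b := by
    rw [hbdef]; simp [map_add, map_mul, map_ofNat, Complex.conj_ofReal]
  have hconj_z : (starRingEnd ℂ) z = -z := by
    rw [hz]; simp [map_mul, map_ofNat, Complex.conj_ofReal]
  have hK : (starRingEnd ℂ) (kummerM a b z) = Complex.exp (-z) * kummerM a b z := by
    rw [kummerM_conj, hconj_a, hconj_b, hconj_z, kummer_transform a hb z]
  have hX : (((2 * ρ : ℝ) : ℂ)) ^ ((lam : ℂ) + 1) = (((2*ρ) ^ (lam+1) : ℝ) : ℂ) := by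
    rw [show ((lam:ℂ)+1) = ((lam+1 : ℝ):ℂ) by push_cast; ring,
      ← Complex.ofReal_cpow (by linarith)]
  have hG : Complex.Gamma (2 * (lam:ℂ) + 2) = ((Real.Gamma (2*lam+2) : ℝ) : ℂ) := by
    rw [show (2*(lam:ℂ)+2) = ((2*lam+2 : ℝ):ℂ) by push_cast; ring, Complex.Gamma_ofReal]
  have hE : Complex.exp (-(((Real.pi : ℝ) : ℂ) * (η : ℂ)) / 2 + (ρ : ℂ) * Complex.I)
      * Complex.exp (-z)
      = Complex.exp (-(((Real.pi : ℝ) : ℂ) * (η : ℂ)) / 2 - (ρ : ℂ) * Complex.I) := by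
    rw [← Complex.exp_add, hz]; congr 1; ring
  show (starRingEnd ℂ) (coulombF lam η ρ) = coulombF lam η ρ
  rw [coulombF, ← ha, ← hbdef, ← hz, hX, hG]
  rw [map_mul, map_div₀, map_mul, map_mul, Complex.conj_ofReal, Complex.conj_ofReal, hK,
    map_mul, Complex.conj_ofReal, ← Complex.exp_conj]
  rw [show (starRingEnd ℂ) (-(((Real.pi : ℝ) : ℂ) * (η : ℂ)) / 2 - (ρ : ℂ) * Complex.I)
      = -(((Real.pi : ℝ) : ℂ) * (η : ℂ)) / 2 + (ρ : ℂ) * Complex.I by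
    simp [map_sub, map_div₀, map_neg, map_mul, map_ofNat, Complex.conj_ofReal, Complex.conj_I]]
  rw [map_ofNat (starRingEnd ℂ) 2]
  rw [← hE]
  ring
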